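/- If x₁, x₂ are independent random variables uniformly distributed on (0,1), then y₁ = √(−2 log x₁) cos(2π x₂) and y₂ = √(−2 log x₁) sin(2π x₂) are independent standard Gaussian random variables (Box–Muller transform). -/

import Mathlib

open MeasureTheory ProbabilityTheory Real

/-!
Up to a sign, `(x₁, x₂) ↦ (y₁, y₂)` is `polarCoord.symm` after `(x₁, x₂) ↦ (r, θ)` with
`r = √(-2 log x₁)` and `θ = 2π x₂ - π`, a bijection of `(0,1)²` onto `(0,∞) × (-π,π)`.
Its Jacobian determinant is `r · r'(x₁) · 2π = -2π / x₁`, since `r²/2 = -log x₁`, while the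
density of the standard Gaussian on `ℝ²` at `(y₁, y₂)` is `e^{-r²/2} / 2π = x₁ / 2π`.
Their product is `1`, so the change of variables formula pushes the uniform measure on `(0,1)²`
forward to the product of two standard Gaussians, which is invariant under `y ↦ -y`.
-/

open Set
open scoped ENNReal

section ChangeOfVariables

variable {E : Type*} [NormedAddCommGroup E] [NormedSpace ℝ E] [FiniteDimensional ℝ E]
  [MeasurableSpace E] [BorelSpace E] (μ : Measure E) [μ.IsAddHaarMeasure]

theorem map_restrict_eq_withDensity_of_abs_det_mul_eq_one {s : Set E} {f : E → E}
    {f' : E → E →L[ℝ] E} {ρ : E → ℝ≥0∞} (hs : MeasurableSet s)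
    (hf' : ∀ x ∈ s, HasFDerivWithinAt f (f' x) s x) (hf : InjOn f s) (hfm : Measurable f)
    (himage : f '' s =ᵐ[μ] univ) (hρ : ∀ x ∈ s, ENNReal.ofReal |(f' x).det| * ρ (f x) = 1) :
    Measure.map f (μ.restrict s) = μ.withDensity ρ := by
  ext A hA
  have hsA : MeasurableSet (f ⁻¹' A ∩ s) := (hfm hA).inter hs
  rw [Measure.map_apply hfm hA, Measure.restrict_apply (hfm hA), withDensity_apply _ hA,
    ← setLIntegral_one, ← setLIntegral_congr_fun hsA (fun x hx => hρ x hx.2),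
    ← lintegral_image_eq_lintegral_abs_det_fderiv_mul μ hsA
      (fun x hx => (hf' x hx.2).mono inter_subset_right) (hf.mono inter_subset_right),
    image_preimage_inter]
  refine setLIntegral_congr ?_
  simpa using ae_eq_set_inter (Filter.EventuallyEq.refl _ A) himage

end ChangeOfVariables

theorem gaussianReal_prod_map_neg (μ μ' : ℝ) (v v' : NNReal) :
    ((gaussianReal μ v).prod (gaussianReal μ' v')).map (fun q => -q) =
      (gaussianReal (-μ) v).prod (gaussianReal (-μ') v') := by
  rw [← gaussianReal_map_neg, ← gaussianReal_map_neg,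
    Measure.map_prod_map _ _ measurable_neg measurable_neg]
  rfl

theorem gaussianPDFReal_zero_one_mul (a b : ℝ) :
    gaussianPDFReal 0 1 a * gaussianPDFReal 0 1 b = (2 * π)⁻¹ * exp (-(a ^ 2 + b ^ 2) / 2) := by
  have h2π : √(2 * π) * √(2 * π) = 2 * π := mul_self_sqrt (by positivity)
  simp only [gaussianPDFReal, NNReal.coe_one, mul_one, sub_zero]
  calc _ = (√(2 * π) * √(2 * π))⁻¹ * exp (-a ^ 2 / 2 + -b ^ 2 / 2) := by rw [exp_add]; ring
    _ = _ := by rw [h2π]; ring_nf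

theorem hasDerivAt_sqrt_neg_two_mul_log {x : ℝ} (hx0 : 0 < x) (hx1 : x < 1) :
    HasDerivAt (fun x => √(-2 * log x)) (-(x * √(-2 * log x))⁻¹) x := by
  have hu : -2 * log x ≠ 0 := by nlinarith [log_neg hx0 hx1]
  convert ((hasDerivAt_log hx0.ne').const_mul (-2)).sqrt hu using 1
  field_simp

/-- The angle is shifted by `-π` into the range `(-π, π)` of `polarCoord`, which negates the
point `polarCoord.symm` returns. -/
noncomputable def boxMullerPolar (p : ℝ × ℝ) : ℝ × ℝ := (√(-2 * log p.1), 2 * π * p.2 - π)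

theorem measurable_boxMullerPolar : Measurable boxMullerPolar := by
  unfold boxMullerPolar
  fun_prop

theorem bijOn_boxMullerPolar : BijOn boxMullerPolar (Ioo 0 1 ×ˢ Ioo 0 1) polarCoord.target := by
  have hπ := pi_pos
  refine InvOn.bijOn (f' := fun q => (exp (-q.1 ^ 2 / 2), (q.2 + π) / (2 * π))) ⟨?_, ?_⟩ ?_ ?_
  · rintro ⟨x, y⟩ ⟨⟨hx0, hx1⟩, -⟩
    have hlog := log_neg hx0 hx1
    simp only [boxMullerPolar, sq_sqrt (by linarith : 0 ≤ -2 * log x)]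
    ext
    · simp [exp_log hx0]
    · field_simp; ring
  · rintro ⟨r, θ⟩ ⟨hr, -⟩
    simp only [boxMullerPolar, log_exp]
    ext
    · simp only [show -2 * (-r ^ 2 / 2) = r ^ 2 by ring, sqrt_sq (le_of_lt hr)]
    · field_simp; ring
  · rintro ⟨x, y⟩ ⟨⟨hx0, hx1⟩, hy0, hy1⟩
    have hlog := log_neg hx0 hx1
    simp only [boxMullerPolar, polarCoord_target, mem_prod, mem_Ioi, mem_Ioo] at *
    refine ⟨sqrt_pos.mpr (by linarith), ?_, ?_⟩ <;> nlinarith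
  · rintro ⟨r, θ⟩ ⟨hr, hθ0, hθ1⟩
    simp only [mem_prod, mem_Ioi, mem_Ioo] at *
    refine ⟨⟨exp_pos _, exp_lt_one_iff.mpr (by nlinarith)⟩, div_pos (by linarith) (by positivity),
      ?_⟩
    rw [div_lt_one (by positivity)]
    linarith

noncomputable def fderivBoxMullerPolar (p : ℝ × ℝ) : ℝ × ℝ →L[ℝ] ℝ × ℝ :=
  (Matrix.toLin (.finTwoProd ℝ) (.finTwoProd ℝ)
    !![-(p.1 * √(-2 * log p.1))⁻¹, 0; 0, 2 * π]).toContinuousLinearMap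

theorem hasFDerivAt_boxMullerPolar {p : ℝ × ℝ} (hp0 : 0 < p.1) (hp1 : p.1 < 1) :
    HasFDerivAt boxMullerPolar (fderivBoxMullerPolar p) p := by
  unfold fderivBoxMullerPolar
  rw [Matrix.toLin_finTwoProd_toContinuousLinearMap]
  convert! HasFDerivAt.prodMk
    ((hasDerivAt_sqrt_neg_two_mul_log hp0 hp1).comp_hasFDerivAt p hasFDerivAt_fst)
    (((hasFDerivAt_snd (𝕜 := ℝ) (p := p)).const_mul (2 * π)).sub_const π) using 2 <;>
  simp [neg_smul _ (ContinuousLinearMap.fst ℝ ℝ ℝ)]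

theorem det_fderivBoxMullerPolar (p : ℝ × ℝ) :
    (fderivBoxMullerPolar p).det = -(p.1 * √(-2 * log p.1))⁻¹ * (2 * π) := by
  simp [fderivBoxMullerPolar, LinearMap.det_toContinuousLinearMap, LinearMap.det_toLin,
    Matrix.det_fin_two_of]

theorem det_fderivPolarCoordSymm_comp_fderivBoxMullerPolar {p : ℝ × ℝ} (hp0 : 0 < p.1)
    (hp1 : p.1 < 1) :
    ((fderivPolarCoordSymm (boxMullerPolar p)).comp (fderivBoxMullerPolar p)).det =
      -(2 * π / p.1) := by
  have hr : 0 < √(-2 * log p.1) := sqrt_pos.mpr (by nlinarith [log_neg hp0 hp1])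
  have hcomp : ((fderivPolarCoordSymm (boxMullerPolar p)).comp (fderivBoxMullerPolar p)).det =
      (fderivPolarCoordSymm (boxMullerPolar p)).det * (fderivBoxMullerPolar p).det :=
    LinearMap.det_comp _ _
  rw [hcomp, det_fderivPolarCoordSymm, det_fderivBoxMullerPolar, boxMullerPolar]
  generalize √(-2 * log p.1) = r at hr ⊢
  field_simp

theorem gaussianPDF_mul_gaussianPDF_polarCoord_symm_boxMullerPolar {p : ℝ × ℝ} (hp0 : 0 < p.1)
    (hp1 : p.1 < 1) :
    gaussianPDF 0 1 (polarCoord.symm (boxMullerPolar p)).1 *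
      gaussianPDF 0 1 (polarCoord.symm (boxMullerPolar p)).2 = ENNReal.ofReal (p.1 / (2 * π)) := by
  have hnorm : (polarCoord.symm (boxMullerPolar p)).1 ^ 2 +
      (polarCoord.symm (boxMullerPolar p)).2 ^ 2 = -2 * log p.1 := by
    rw [← sq_sqrt (by nlinarith [log_neg hp0 hp1] : 0 ≤ -2 * log p.1)]
    simp only [polarCoord_symm_apply, boxMullerPolar]
    linear_combination √(-2 * log p.1) ^ 2 * sin_sq_add_cos_sq (2 * π * p.2 - π)
  rw [gaussianPDF, gaussianPDF, ← ENNReal.ofReal_mul (gaussianPDFReal_nonneg 0 1 _),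
    gaussianPDFReal_zero_one_mul, hnorm, show -(-2 * log p.1) / 2 = log p.1 by ring, exp_log hp0,
    inv_mul_eq_div]

theorem map_polarCoord_symm_boxMullerPolar :
    (volume.restrict (Ioo (0 : ℝ) 1 ×ˢ Ioo (0 : ℝ) 1)).map (polarCoord.symm ∘ boxMullerPolar) =
      (gaussianReal 0 1).prod (gaussianReal 0 1) := by
  rw [gaussianReal_of_var_ne_zero 0 one_ne_zero,
    prod_withDensity (measurable_gaussianPDF 0 1) (measurable_gaussianPDF 0 1),
    ← Measure.volume_eq_prod]
  refine map_restrict_eq_withDensity_of_abs_det_mul_eq_one volume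
    (f' := fun p => (fderivPolarCoordSymm (boxMullerPolar p)).comp (fderivBoxMullerPolar p))
    (measurableSet_Ioo.prod measurableSet_Ioo) (fun p hp => ?_)
    (polarCoord.symm.injOn.comp bijOn_boxMullerPolar.injOn bijOn_boxMullerPolar.mapsTo)
    (continuous_polarCoord_symm.measurable.comp measurable_boxMullerPolar) ?_ (fun p hp => ?_)
  · exact ((hasFDerivAt_polarCoord_symm _).comp p
      (hasFDerivAt_boxMullerPolar hp.1.1 hp.1.2)).hasFDerivWithinAt
  · rw [image_comp, bijOn_boxMullerPolar.image_eq, polarCoord.symm_image_target_eq_source]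
    exact polarCoord_source_ae_eq_univ
  · rw [Function.comp_apply,
      gaussianPDF_mul_gaussianPDF_polarCoord_symm_boxMullerPolar hp.1.1 hp.1.2,
      det_fderivPolarCoordSymm_comp_fderivBoxMullerPolar hp.1.1 hp.1.2, abs_neg,
      abs_of_pos (div_pos two_pi_pos hp.1.1), ← ENNReal.ofReal_mul (div_pos two_pi_pos hp.1.1).le,
      div_mul_div_cancel₀ hp.1.1.ne', div_self two_pi_pos.ne', ENNReal.ofReal_one]

theorem box_muller :
    Measure.map
      (fun p : ℝ × ℝ =>
        (Real.sqrt (-2 * Real.log p.1) * Real.cos (2 * π * p.2),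
         Real.sqrt (-2 * Real.log p.1) * Real.sin (2 * π * p.2)))
      ((volume.restrict (Set.Ioo (0:ℝ) 1)).prod (volume.restrict (Set.Ioo (0:ℝ) 1)))
    = (gaussianReal 0 1).prod (gaussianReal 0 1) := by
  have hfactor : (fun p : ℝ × ℝ =>
      (√(-2 * log p.1) * cos (2 * π * p.2), √(-2 * log p.1) * sin (2 * π * p.2))) =
      (fun q => -q) ∘ polarCoord.symm ∘ boxMullerPolar := by
    ext p <;> simp [boxMullerPolar, cos_sub_pi, sin_sub_pi]
  rw [hfactor, ← Measure.map_map measurable_neg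
      (continuous_polarCoord_symm.measurable.comp measurable_boxMullerPolar),
    Measure.prod_restrict, ← Measure.volume_eq_prod, map_polarCoord_symm_boxMullerPolar,
    gaussianReal_prod_map_neg, neg_zero]
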